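/- arXiv:1203.2664 — 3 statements merged into one kernel-verified Lean document; each statement's English description precedes it below -/
import Mathlib

section
/- Let k₁, k₂, m be natural numbers with m < k₁ and m < k₂. Then there exist subspaces X₁, X₂ of E with dim X₁ = k₁, dim X₂ = k₂, X₁ ⊥g X₂, and dim(X₁ ∩ X₂) = m, if and only if k₁ + k₂ − m ≤ dim E. -/
/-- `Perp X Y`: every vector in the direction of `X` is orthogonal to every
vector in the direction of `Y`. -/
def Perp {E : Type*} [NormedAddCommGroup E] [InnerProductSpace ℝ E]
    (X Y : AffineSubspace ℝ E) : Prop :=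
  ∀ u ∈ X.direction, ∀ v ∈ Y.direction, (inner ℝ u v : ℝ) = 0

/-- `PerpX X Y`: `X ⊥ Y` and `X ∩ Y ≠ ∅`. -/
def PerpX {E : Type*} [NormedAddCommGroup E] [InnerProductSpace ℝ E]
    (X Y : AffineSubspace ℝ E) : Prop :=
  Perp X Y ∧ ((X : Set E) ∩ (Y : Set E)).Nonempty

/-- `PerpGo X₁ X₂`: the relation `⊥g∘`. -/
def PerpGo {E : Type*} [NormedAddCommGroup E] [InnerProductSpace ℝ E]
    (X₁ X₂ : AffineSubspace ℝ E) : Prop :=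
  ∃ q : E, q ∈ X₁ ⊓ X₂ ∧ ∃ Z₁ Z₂ : AffineSubspace ℝ E,
    q ∈ Z₁ ∧ q ∈ Z₂ ∧ PerpX Z₁ (X₁ ⊓ X₂) ∧ PerpX Z₂ (X₁ ⊓ X₂) ∧ PerpX Z₁ Z₂ ∧
    (X₁ ⊓ X₂) ⊔ Z₁ = X₁ ∧ (X₁ ⊓ X₂) ⊔ Z₂ = X₂

/-- `PerpG X₁ X₂`: the relation `⊥g`. -/
def PerpG {E : Type*} [NormedAddCommGroup E] [InnerProductSpace ℝ E]
    (X₁ X₂ : AffineSubspace ℝ E) : Prop :=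
  PerpGo X₁ X₂ ∧ X₁ ⊓ X₂ ≠ X₁ ∧ X₁ ⊓ X₂ ≠ X₂

/-- Dimension of an affine subspace: the dimension of its direction. -/
noncomputable def adim {E : Type*} [NormedAddCommGroup E] [InnerProductSpace ℝ E]
    (X : AffineSubspace ℝ E) : ℕ :=
  Module.finrank ℝ X.direction

/-!
If `X₁ ⊥g∘ X₂` with meet `W`, then the directions of `W`, `Z₁` and `Z₂` are mutually orthogonal,
so `dim X₁ + dim X₂ - dim W = dim (dir W ⊕ dir Z₁ ⊕ dir Z₂) ≤ dim E`. Conversely, when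
`k₁ + k₂ - m ≤ dim E` there are mutually orthogonal linear subspaces `W, Z₁, Z₂` of dimensions
`m, k₁ - m, k₂ - m`, and `Xᵢ = W ⊕ Zᵢ` works: by modularity `X₁ ∩ X₂ = W ⊔ (Z₁ ∩ (W ⊕ Z₂)) = W`.
-/

namespace Submodule

variable {k V : Type*} [Ring k] [AddCommGroup V] [Module k V]

theorem toAffineSubspace_nonempty (p : Submodule k V) : (p.toAffineSubspace : Set V).Nonempty :=
  ⟨0, mem_toAffineSubspace.2 p.zero_mem⟩

theorem toAffineSubspace_inf (p q : Submodule k V) :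
    (p ⊓ q).toAffineSubspace = p.toAffineSubspace ⊓ q.toAffineSubspace := by
  ext x
  simp [mem_toAffineSubspace, AffineSubspace.mem_inf_iff]

theorem toAffineSubspace_sup (p q : Submodule k V) :
    (p ⊔ q).toAffineSubspace = p.toAffineSubspace ⊔ q.toAffineSubspace := by
  have hp : (0 : V) ∈ p.toAffineSubspace := mem_toAffineSubspace.2 p.zero_mem
  have hq : (0 : V) ∈ q.toAffineSubspace := mem_toAffineSubspace.2 q.zero_mem
  refine AffineSubspace.ext_of_direction_eq ?_ ⟨0, mem_toAffineSubspace.2 (zero_mem _), ?_⟩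
  · rw [AffineSubspace.direction_sup_eq_sup_direction hp hq]
    simp only [toAffineSubspace_direction]
  · exact SetLike.le_def.1 le_sup_left hp

theorem exists_le_finrank_eq {K : Type*} [DivisionRing K] [Module K V] [FiniteDimensional K V]
    (U : Submodule K V) {d : ℕ} (hd : d ≤ Module.finrank K U) :
    ∃ Z ≤ U, Module.finrank K Z = d := by
  obtain ⟨v, hv⟩ := exists_linearIndependent_of_le_finrank hd
  refine ⟨span K (Set.range (U.subtype ∘ v)), ?_, ?_⟩
  · rw [span_le]
    rintro _ ⟨i, rfl⟩
    exact (v i).2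
  · rw [finrank_span_eq_card (hv.map' U.subtype U.ker_subtype), Fintype.card_fin]

end Submodule

namespace Submodule

variable {𝕜 E : Type*} [RCLike 𝕜] [NormedAddCommGroup E] [InnerProductSpace 𝕜 E]

theorem IsOrtho.finrank_sup {U V : Submodule 𝕜 E} [FiniteDimensional 𝕜 U]
    [FiniteDimensional 𝕜 V] (h : U ⟂ V) :
    Module.finrank 𝕜 (U ⊔ V : Submodule 𝕜 E) = Module.finrank 𝕜 U + Module.finrank 𝕜 V := by
  rw [← finrank_sup_add_finrank_inf_eq, h.disjoint.eq_bot, finrank_bot, add_zero]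

theorem sup_inf_sup_eq_of_isOrtho {W Z₁ Z₂ : Submodule 𝕜 E} (h₁ : Z₁ ⟂ W) (h₁₂ : Z₁ ⟂ Z₂) :
    (W ⊔ Z₁) ⊓ (W ⊔ Z₂) = W := by
  rw [sup_inf_assoc_of_le Z₁ le_sup_left, (isOrtho_sup_right.2 ⟨h₁, h₁₂⟩).disjoint.eq_bot,
    sup_bot_eq]

theorem exists_isOrtho_finrank_eq [FiniteDimensional 𝕜 E] (U : Submodule 𝕜 E) {d : ℕ}
    (hd : Module.finrank 𝕜 U + d ≤ Module.finrank 𝕜 E) :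
    ∃ Z : Submodule 𝕜 E, Z ⟂ U ∧ Module.finrank 𝕜 Z = d :=
  Uᗮ.exists_le_finrank_eq (by have := U.finrank_add_finrank_orthogonal; omega)

end Submodule

section

open Submodule

variable {E : Type*} [NormedAddCommGroup E] [InnerProductSpace ℝ E]

theorem adim_toAffineSubspace (p : Submodule ℝ E) :
    adim p.toAffineSubspace = Module.finrank ℝ p := by
  rw [adim, toAffineSubspace_direction]

theorem perp_iff_isOrtho {X Y : AffineSubspace ℝ E} : Perp X Y ↔ X.direction ⟂ Y.direction :=
  isOrtho_iff_inner_eq.symm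

theorem perpX_toAffineSubspace {U V : Submodule ℝ E} (h : U ⟂ V) :
    PerpX U.toAffineSubspace V.toAffineSubspace := by
  refine ⟨?_, 0, mem_toAffineSubspace.2 U.zero_mem, mem_toAffineSubspace.2 V.zero_mem⟩
  rwa [perp_iff_isOrtho, toAffineSubspace_direction, toAffineSubspace_direction]

theorem PerpGo.adim_add_adim_le [FiniteDimensional ℝ E] {X₁ X₂ : AffineSubspace ℝ E}
    (h : PerpGo X₁ X₂) : adim X₁ + adim X₂ ≤ adim (X₁ ⊓ X₂) + Module.finrank ℝ E := by
  obtain ⟨q, hq, Z₁, Z₂, hq₁, hq₂, ⟨hZ₁, -⟩, ⟨hZ₂, -⟩, ⟨hZ₁₂, -⟩, hs₁, hs₂⟩ := h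
  rw [perp_iff_isOrtho] at hZ₁ hZ₂ hZ₁₂
  have hdim₁ : adim X₁ = adim (X₁ ⊓ X₂) + Module.finrank ℝ Z₁.direction := by
    rw [adim, ← hs₁, AffineSubspace.direction_sup_eq_sup_direction hq hq₁, hZ₁.symm.finrank_sup,
      hs₁, adim]
  have hdim₂ : adim X₂ = adim (X₁ ⊓ X₂) + Module.finrank ℝ Z₂.direction := by
    rw [adim, ← hs₂, AffineSubspace.direction_sup_eq_sup_direction hq hq₂, hZ₂.symm.finrank_sup,
      hs₂, adim]
  have hsum := (isOrtho_sup_left.2 ⟨hZ₂.symm, hZ₁₂⟩).finrank_sup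
  rw [hZ₁.symm.finrank_sup] at hsum
  have hle := finrank_le ((X₁ ⊓ X₂).direction ⊔ Z₁.direction ⊔ Z₂.direction)
  unfold adim at hdim₁ hdim₂ ⊢
  omega

theorem perpG_toAffineSubspace_sup {W Z₁ Z₂ : Submodule ℝ E} (h₁ : Z₁ ⟂ W) (h₂ : Z₂ ⟂ W)
    (h₁₂ : Z₁ ⟂ Z₂) (hZ₁ : Z₁ ≠ ⊥) (hZ₂ : Z₂ ≠ ⊥) :
    PerpG (W ⊔ Z₁).toAffineSubspace (W ⊔ Z₂).toAffineSubspace := by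
  have hinf : (W ⊔ Z₁).toAffineSubspace ⊓ (W ⊔ Z₂).toAffineSubspace = W.toAffineSubspace := by
    rw [← toAffineSubspace_inf, sup_inf_sup_eq_of_isOrtho h₁ h₁₂]
  have hne {Z : Submodule ℝ E} (h : Z ⟂ W) (hZ : Z ≠ ⊥) :
      W.toAffineSubspace ≠ (W ⊔ Z).toAffineSubspace := fun heq => by
    have : W = W ⊔ Z := by simpa only [toAffineSubspace_direction] using congrArg (·.direction) heq
    exact hZ (h.disjoint.eq_bot_of_le (left_eq_sup.1 this))
  refine ⟨⟨0, ?_, Z₁.toAffineSubspace, Z₂.toAffineSubspace, mem_toAffineSubspace.2 Z₁.zero_mem,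
    mem_toAffineSubspace.2 Z₂.zero_mem, ?_, ?_, perpX_toAffineSubspace h₁₂, ?_, ?_⟩, ?_, ?_⟩ <;>
    rw [hinf]
  · exact mem_toAffineSubspace.2 W.zero_mem
  · exact perpX_toAffineSubspace h₁
  · exact perpX_toAffineSubspace h₂
  · exact (toAffineSubspace_sup W Z₁).symm
  · exact (toAffineSubspace_sup W Z₂).symm
  · exact hne h₁ hZ₁
  · exact hne h₂ hZ₂

end

variable {E : Type*} [NormedAddCommGroup E] [InnerProductSpace ℝ E] [FiniteDimensional ℝ E]

theorem stmt4 (k₁ k₂ m : ℕ) (hm₁ : m < k₁) (hm₂ : m < k₂) :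
    (∃ X₁ X₂ : AffineSubspace ℝ E, (X₁ : Set E).Nonempty ∧ (X₂ : Set E).Nonempty ∧
        adim X₁ = k₁ ∧ adim X₂ = k₂ ∧ PerpG X₁ X₂ ∧ adim (X₁ ⊓ X₂) = m) ↔
      k₁ + k₂ - m ≤ Module.finrank ℝ E := by
  constructor
  · rintro ⟨X₁, X₂, -, -, rfl, rfl, ⟨h, -⟩, rfl⟩
    have := h.adim_add_adim_le
    omega
  · intro h
    obtain ⟨W, -, hW⟩ := (⊤ : Submodule ℝ E).exists_le_finrank_eq (d := m) (by
      rw [finrank_top]; omega)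
    obtain ⟨Z₁, hZ₁W, hZ₁⟩ := W.exists_isOrtho_finrank_eq (d := k₁ - m) (by omega)
    obtain ⟨Z₂, hZ₂WZ₁, hZ₂⟩ := (W ⊔ Z₁).exists_isOrtho_finrank_eq (d := k₂ - m) (by
      rw [hZ₁W.symm.finrank_sup]; omega)
    obtain ⟨hZ₂W, hZ₂Z₁⟩ := Submodule.isOrtho_sup_right.1 hZ₂WZ₁
    refine ⟨_, _, (W ⊔ Z₁).toAffineSubspace_nonempty, (W ⊔ Z₂).toAffineSubspace_nonempty, ?_, ?_,
      perpG_toAffineSubspace_sup hZ₁W hZ₂W hZ₂Z₁.symm ?_ ?_, ?_⟩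
    · rw [adim_toAffineSubspace, hZ₁W.symm.finrank_sup]; omega
    · rw [adim_toAffineSubspace, hZ₂W.symm.finrank_sup]; omega
    · exact Submodule.finrank_eq_zero.not.1 (by omega)
    · exact Submodule.finrank_eq_zero.not.1 (by omega)
    · rwa [← Submodule.toAffineSubspace_inf, Submodule.sup_inf_sup_eq_of_isOrtho hZ₁W hZ₂Z₁.symm,
        adim_toAffineSubspace]
end

section
/- Let A, B, C be subspaces of E. If A ⊥g B and A ∩ B ⊊ C ⊆ B, then A ⊥g C. -/
variable {E : Type*} [NormedAddCommGroup E] [InnerProductSpace ℝ E] [FiniteDimensional ℝ E]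

/-!
If `Z₂` complements `D = A ⊓ B` orthogonally in `B` through `q`, then for
`D ≤ C ≤ B` the piece `mk' q (C.direction ⊓ Z₂.direction)` of `Z₂` complements `D`
in `C` by the modular law, and it stays orthogonal to `D` and to `Z₁`. Since
`A ⊓ C = A ⊓ B`, these complements witness `A ⊥g∘ C`.
-/

theorem inf_eq_inf_of_inf_le_of_le {α : Type*} [Lattice α] {a b c : α}
    (hbc : a ⊓ b ≤ c) (hcb : c ≤ b) : a ⊓ c = a ⊓ b :=
  le_antisymm (inf_le_inf_left a hcb) (le_inf inf_le_left hbc)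

namespace AffineSubspace

variable {k V P : Type*} [Ring k] [AddCommGroup V] [Module k V] [AddTorsor V P]

theorem sup_mk'_direction_inf_eq {C D Z : AffineSubspace k P} {q : P}
    (hqD : q ∈ D) (hqZ : q ∈ Z) (hDC : D ≤ C) (hC : C ≤ D ⊔ Z) :
    D ⊔ mk' q (C.direction ⊓ Z.direction) = C := by
  have hqC : q ∈ C := hDC hqD
  refine ext_of_direction_eq ?_ ⟨q, (le_sup_left : D ≤ _) hqD, hqC⟩
  have hCdir : C.direction ≤ D.direction ⊔ Z.direction :=
    direction_sup_eq_sup_direction hqD hqZ ▸ direction_le hC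
  rw [direction_sup_eq_sup_direction hqD (self_mem_mk' q _), direction_mk', inf_comm,
    ← sup_inf_assoc_of_le _ (direction_le hDC), inf_eq_right.mpr hCdir]

end AffineSubspace

section

variable {V : Type*} [NormedAddCommGroup V] [InnerProductSpace ℝ V]

theorem Perp.mono_left {X X' Y : AffineSubspace ℝ V} (h : Perp X Y)
    (hX : X'.direction ≤ X.direction) : Perp X' Y :=
  fun u hu v hv => h u (hX hu) v hv

theorem Perp.mono_right {X Y Y' : AffineSubspace ℝ V} (h : Perp X Y)
    (hY : Y'.direction ≤ Y.direction) : Perp X Y' :=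
  fun u hu v hv => h u hu v (hY hv)

theorem PerpGo.of_inf_le_of_le {A B C : AffineSubspace ℝ V} (h : PerpGo A B)
    (hBC : A ⊓ B ≤ C) (hCB : C ≤ B) : PerpGo A C := by
  obtain ⟨q, hq, Z₁, Z₂, hqZ₁, hqZ₂, ⟨hZ₁, -⟩, ⟨hZ₂, -⟩, ⟨hZ₁₂, -⟩, hA, hB⟩ := h
  set Z₂' := AffineSubspace.mk' q (C.direction ⊓ Z₂.direction)
  have hqZ₂' : q ∈ Z₂' := AffineSubspace.self_mem_mk' q _
  have hZ₂'Z₂ : Z₂'.direction ≤ Z₂.direction := by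
    rw [AffineSubspace.direction_mk']
    exact inf_le_right
  have hC : A ⊓ B ⊔ Z₂' = C :=
    AffineSubspace.sup_mk'_direction_inf_eq hq hqZ₂ hBC (hCB.trans hB.ge)
  unfold PerpGo
  rw [inf_eq_inf_of_inf_le_of_le hBC hCB]
  exact ⟨q, hq, Z₁, Z₂', hqZ₁, hqZ₂', ⟨hZ₁, q, hqZ₁, hq⟩,
    ⟨hZ₂.mono_left hZ₂'Z₂, q, hqZ₂', hq⟩, ⟨hZ₁₂.mono_right hZ₂'Z₂, q, hqZ₁, hqZ₂'⟩, hA, hC⟩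

end

theorem stmt10_general (A B C : AffineSubspace ℝ E)
    (h₁ : PerpG A B) (h₂ : A ⊓ B < C) (h₃ : C ≤ B) :
    PerpG A C := by
  obtain ⟨hAB, hne, -⟩ := h₁
  have hAC : A ⊓ C = A ⊓ B := inf_eq_inf_of_inf_le_of_le h₂.le h₃
  exact ⟨hAB.of_inf_le_of_le h₂.le h₃, hAC ▸ hne, hAC ▸ h₂.ne⟩

theorem stmt10 (A B C : AffineSubspace ℝ E)
    (hA : (A : Set E).Nonempty) (hB : (B : Set E).Nonempty) (hC : (C : Set E).Nonempty)
    (h₁ : PerpG A B) (h₂ : A ⊓ B < C) (h₃ : C ≤ B) :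
    PerpG A C :=
  stmt10_general A B C h₁ h₂ h₃
end

section
/- Let A, B, C be subspaces of E. If A ⊥g∘ B, B is parallel to C, and A ∩ C ≠ ∅, then A ⊥g∘ C. -/
variable {E : Type*} [NormedAddCommGroup E] [InnerProductSpace ℝ E] [FiniteDimensional ℝ E]

/-!
Translating everything by `p -ᵥ q`, where `q ∈ A ∩ B` is the base point of the witness for
`A ⊥g∘ B` and `p ∈ A ∩ C`, fixes `A`, carries `B` onto the parallel subspace `C`, and carries the
witnessing subspaces `Z₁, Z₂` to witnesses for `A ⊥g∘ C`, since all the defining conditions are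
translation invariant.
-/

open Pointwise

namespace AffineSubspace

variable {k V P : Type*} [Ring k] [AddCommGroup V] [Module k V] [AddTorsor V P]

theorem Parallel.vadd_eq_of_vadd_mem {B C : AffineSubspace k P} (h : B.Parallel C) {q : P}
    (hq : q ∈ B) {v : V} (hv : v +ᵥ q ∈ C) : v +ᵥ B = C :=
  ext_of_direction_eq (by rw [pointwise_vadd_direction, h.direction_eq])
    ⟨v +ᵥ q, vadd_mem_pointwise_vadd_iff.2 hq, hv⟩

theorem pointwise_vadd_inf (v : V) (S T : AffineSubspace k P) :
    v +ᵥ (S ⊓ T) = (v +ᵥ S) ⊓ (v +ᵥ T) :=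
  SetLike.coe_injective <| by
    simp only [coe_pointwise_vadd]
    exact Set.vadd_set_inter

theorem pointwise_vadd_sup (v : V) (S T : AffineSubspace k P) :
    v +ᵥ (S ⊔ T) = (v +ᵥ S) ⊔ (v +ᵥ T) := by
  simp only [pointwise_vadd_eq_map, map_sup]

end AffineSubspace

open AffineSubspace

section InnerProductSpace

variable {V : Type*} [NormedAddCommGroup V] [InnerProductSpace ℝ V]

theorem Perp.vadd {X Y : AffineSubspace ℝ V} (h : Perp X Y) (v : V) :
    Perp (v +ᵥ X) (v +ᵥ Y) := by
  simpa only [Perp, pointwise_vadd_direction] using h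

theorem PerpX.vadd {X Y : AffineSubspace ℝ V} (h : PerpX X Y) (v : V) :
    PerpX (v +ᵥ X) (v +ᵥ Y) := by
  obtain ⟨hperp, x, hxX, hxY⟩ := h
  exact ⟨hperp.vadd v, v +ᵥ x, Set.vadd_mem_vadd_set hxX, Set.vadd_mem_vadd_set hxY⟩

theorem PerpGo.vadd {X₁ X₂ : AffineSubspace ℝ V} (h : PerpGo X₁ X₂) (v : V) :
    PerpGo (v +ᵥ X₁) (v +ᵥ X₂) := by
  obtain ⟨q, hq, Z₁, Z₂, hqZ₁, hqZ₂, hZ₁, hZ₂, hZ₁₂, hsup₁, hsup₂⟩ := h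
  unfold PerpGo
  rw [← pointwise_vadd_inf]
  refine ⟨v +ᵥ q, vadd_mem_pointwise_vadd_iff.2 hq, v +ᵥ Z₁, v +ᵥ Z₂,
    vadd_mem_pointwise_vadd_iff.2 hqZ₁, vadd_mem_pointwise_vadd_iff.2 hqZ₂,
    hZ₁.vadd v, hZ₂.vadd v, hZ₁₂.vadd v, ?_, ?_⟩
  · rw [← pointwise_vadd_sup, hsup₁]
  · rw [← pointwise_vadd_sup, hsup₂]

end InnerProductSpace

theorem stmt15_general (A B C : AffineSubspace ℝ E)
    (h₁ : PerpGo A B) (h₂ : AffineSubspace.Parallel B C)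
    (h₃ : ((A : Set E) ∩ (C : Set E)).Nonempty) :
    PerpGo A C := by
  have ⟨q, ⟨hqA, hqB⟩, _⟩ := h₁
  obtain ⟨p, hpA, hpC⟩ := h₃
  have hA : (p -ᵥ q) +ᵥ A = A :=
    (Parallel.refl A).vadd_eq_of_vadd_mem hqA (by rwa [vsub_vadd])
  have hC : (p -ᵥ q) +ᵥ B = C := h₂.vadd_eq_of_vadd_mem hqB (by rwa [vsub_vadd])
  simpa only [hA, hC] using h₁.vadd (p -ᵥ q)

theorem stmt15 (A B C : AffineSubspace ℝ E)
    (hA : (A : Set E).Nonempty) (hB : (B : Set E).Nonempty) (hC : (C : Set E).Nonempty)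
    (h₁ : PerpGo A B) (h₂ : AffineSubspace.Parallel B C)
    (h₃ : ((A : Set E) ∩ (C : Set E)).Nonempty) :
    PerpGo A C :=
  stmt15_general A B C h₁ h₂ h₃
end
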